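/- The algebra B is finite dimensional with dim_F B = n^2. More precisely: e_i B e_j = 0 for i > j; e_i B e_i is one-dimensional, spanned by e_i; and for i < j the space e_i B e_j is two-dimensional, with basis {a_i a_{i+1}⋯a_{j−1}, b_i a_{i+1}⋯a_{j−1}} (these two elements being homogeneous of degrees 0 and 1 respectively); altogether the elements e_i (1 ≤ i ≤ n), a_i a_{i+1}⋯a_{j−1} and b_i a_{i+1}⋯a_{j−1} (1 ≤ i < j ≤ n) form an F-basis of B. -/

import Mathlib

noncomputable section

/-- Generators of the algebra `B = R(n,1)`: idempotents `e i` (the paper's `(i+1)`),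
arrows `a j` (the paper's `(j+1|j+2)`) and dotted arrows `b j` (the paper's
`(j+1 • j+2)`). -/
inductive BGen (n : ℕ) : Type
  | e : Fin n → BGen n
  | a : Fin (n - 1) → BGen n
  | b : Fin (n - 1) → BGen n

/-- The index `j`, viewed in `Fin n`. -/
def loIdx {n : ℕ} (j : Fin (n - 1)) : Fin n :=
  ⟨j.val, by have := j.isLt; omega⟩

/-- The index `j+1`, viewed in `Fin n`. -/
def hiIdx {n : ℕ} (j : Fin (n - 1)) : Fin n :=
  ⟨j.val + 1, by have := j.isLt; omega⟩

def ge (F : Type) [Field F] (n : ℕ) (i : Fin n) : FreeAlgebra F (BGen n) :=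
  FreeAlgebra.ι F (BGen.e i)

def ga (F : Type) [Field F] (n : ℕ) (j : Fin (n - 1)) : FreeAlgebra F (BGen n) :=
  FreeAlgebra.ι F (BGen.a j)

def gb (F : Type) [Field F] (n : ℕ) (j : Fin (n - 1)) : FreeAlgebra F (BGen n) :=
  FreeAlgebra.ι F (BGen.b j)

/-- The defining relations of the algebra `B = R(n,1)`. -/
inductive BRel (F : Type) [Field F] (n : ℕ) :
    FreeAlgebra F (BGen n) → FreeAlgebra F (BGen n) → Prop
  | ee_idem (i : Fin n) : BRel F n (ge F n i * ge F n i) (ge F n i)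
  | ee_orth (i i' : Fin n) (hii : i ≠ i') : BRel F n (ge F n i * ge F n i') 0
  | sum_one : BRel F n (∑ i : Fin n, ge F n i) 1
  | ea_eq (j : Fin (n - 1)) : BRel F n (ge F n (loIdx j) * ga F n j) (ga F n j)
  | ea_ne (i : Fin n) (j : Fin (n - 1)) (hij : i ≠ loIdx j) :
      BRel F n (ge F n i * ga F n j) 0
  | ae_eq (j : Fin (n - 1)) : BRel F n (ga F n j * ge F n (hiIdx j)) (ga F n j)
  | ae_ne (i : Fin n) (j : Fin (n - 1)) (hij : i ≠ hiIdx j) :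
      BRel F n (ga F n j * ge F n i) 0
  | eb_eq (j : Fin (n - 1)) : BRel F n (ge F n (loIdx j) * gb F n j) (gb F n j)
  | eb_ne (i : Fin n) (j : Fin (n - 1)) (hij : i ≠ loIdx j) :
      BRel F n (ge F n i * gb F n j) 0
  | be_eq (j : Fin (n - 1)) : BRel F n (gb F n j * ge F n (hiIdx j)) (gb F n j)
  | be_ne (i : Fin n) (j : Fin (n - 1)) (hij : i ≠ hiIdx j) :
      BRel F n (gb F n j * ge F n i) 0
  | ab (j j' : Fin (n - 1)) (hjj : (j' : ℕ) = (j : ℕ) + 1) :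
      BRel F n (ga F n j * gb F n j') (gb F n j * ga F n j')
  | bb (j j' : Fin (n - 1)) (hjj : (j' : ℕ) = (j : ℕ) + 1) :
      BRel F n (gb F n j * gb F n j') 0

/-- The algebra `B = R(n,1)`, presented by generators and relations. -/
abbrev Bn (F : Type) [Field F] (n : ℕ) : Type := RingQuot (BRel F n)

/-- The idempotent `e_{i+1}` of `B`. -/
def eB (F : Type) [Field F] (n : ℕ) (i : Fin n) : Bn F n :=
  RingQuot.mkAlgHom F (BRel F n) (ge F n i)

/-- The degree-0 generator `a_{j+1} = (j+1 | j+2)` of `B`. -/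
def aB (F : Type) [Field F] (n : ℕ) (j : Fin (n - 1)) : Bn F n :=
  RingQuot.mkAlgHom F (BRel F n) (ga F n j)

/-- The degree-1 generator `b_{j+1} = (j+1 • j+2)` of `B`. -/
def bB (F : Type) [Field F] (n : ℕ) (j : Fin (n - 1)) : Bn F n :=
  RingQuot.mkAlgHom F (BRel F n) (gb F n j)

/-- Degrees of the generators: `deg e_i = deg a_j = 0`, `deg b_j = 1`. -/
def bdeg {n : ℕ} : BGen n → ℕ
  | .e _ => 0
  | .a _ => 0
  | .b _ => 1

/-- The degree-`m` graded component of `B`. -/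
def degCompB (F : Type) [Field F] (n : ℕ) (m : ℕ) : Submodule F (Bn F n) :=
  Submodule.span F
    { x : Bn F n | ∃ l : List (BGen n), (l.map bdeg).sum = m ∧
        x = (l.map fun g => RingQuot.mkAlgHom F (BRel F n) (FreeAlgebra.ι F g)).prod }

/-- The path `a_i a_{i+1} ⋯ a_{j−1}` from `i` to `j` (`i < j`, 1-indexed in the paper). -/
def aPath (F : Type) [Field F] (n : ℕ) (i j : Fin n) : Bn F n :=
  ((List.finRange (j.val - i.val)).map fun t =>
      aB F n ⟨i.val + t.val, by have := t.isLt; have := j.isLt; omega⟩).prod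

/-- The path `b_i a_{i+1} ⋯ a_{j−1}` from `i` to `j` (`i < j`, 1-indexed in the paper). -/
def bPath (F : Type) [Field F] (n : ℕ) (i j : Fin n) (hij : i < j) : Bn F n :=
  bB F n ⟨i.val, by have h1 : i.val < j.val := hij; have := j.isLt; omega⟩ *
  ((List.finRange (j.val - i.val - 1)).map fun t =>
      aB F n ⟨i.val + 1 + t.val, by have := t.isLt; have := j.isLt; omega⟩).prod

/-- The index type of the claimed basis of `B`: idempotents, `a`-paths and `b`-paths. -/
abbrev BIdx (n : ℕ) : Type :=
  Fin n ⊕ {p : Fin n × Fin n // p.1 < p.2} ⊕ {p : Fin n × Fin n // p.1 < p.2}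

/-- The claimed basis family of `B`. -/
def bFam (F : Type) [Field F] (n : ℕ) : BIdx n → Bn F n
  | .inl i => eB F n i
  | .inr (.inl p) => aPath F n p.1.1 p.1.2
  | .inr (.inr p) => bPath F n p.1.1 p.1.2 p.2


namespace Stmt15

variable {F : Type} [Field F] {n : ℕ}

lemma brel {x y : FreeAlgebra F (BGen n)} (h : BRel F n x y) :
    RingQuot.mkAlgHom F (BRel F n) x = RingQuot.mkAlgHom F (BRel F n) y :=
  RingQuot.mkAlgHom_rel F h

lemma ee_self (i : Fin n) : eB F n i * eB F n i = eB F n i := by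
  have h := brel (F := F) (BRel.ee_idem i); rwa [map_mul] at h

lemma ee_ne {i i' : Fin n} (h : i ≠ i') : eB F n i * eB F n i' = 0 := by
  have h2 := brel (F := F) (BRel.ee_orth i i' h); rwa [map_mul, map_zero] at h2

lemma sum_e : ∑ i : Fin n, eB F n i = 1 := by
  have h := brel (F := F) (n := n) BRel.sum_one; rwa [map_sum, map_one] at h

lemma ea_eq (j : Fin (n-1)) : eB F n (loIdx j) * aB F n j = aB F n j := by
  have h := brel (F := F) (BRel.ea_eq j); rwa [map_mul] at h

lemma ea_ne {i : Fin n} {j : Fin (n-1)} (h : i ≠ loIdx j) : eB F n i * aB F n j = 0 := by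
  have h2 := brel (F := F) (BRel.ea_ne i j h); rwa [map_mul, map_zero] at h2

lemma ae_eq (j : Fin (n-1)) : aB F n j * eB F n (hiIdx j) = aB F n j := by
  have h := brel (F := F) (BRel.ae_eq j); rwa [map_mul] at h

lemma ae_ne {i : Fin n} {j : Fin (n-1)} (h : i ≠ hiIdx j) : aB F n j * eB F n i = 0 := by
  have h2 := brel (F := F) (BRel.ae_ne i j h); rwa [map_mul, map_zero] at h2

lemma eb_eq (j : Fin (n-1)) : eB F n (loIdx j) * bB F n j = bB F n j := by
  have h := brel (F := F) (BRel.eb_eq j); rwa [map_mul] at h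

lemma eb_ne {i : Fin n} {j : Fin (n-1)} (h : i ≠ loIdx j) : eB F n i * bB F n j = 0 := by
  have h2 := brel (F := F) (BRel.eb_ne i j h); rwa [map_mul, map_zero] at h2

lemma be_eq (j : Fin (n-1)) : bB F n j * eB F n (hiIdx j) = bB F n j := by
  have h := brel (F := F) (BRel.be_eq j); rwa [map_mul] at h

lemma be_ne {i : Fin n} {j : Fin (n-1)} (h : i ≠ hiIdx j) : bB F n j * eB F n i = 0 := by
  have h2 := brel (F := F) (BRel.be_ne i j h); rwa [map_mul, map_zero] at h2

lemma ab_comm {j j' : Fin (n-1)} (h : (j' : ℕ) = (j : ℕ) + 1) :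
    aB F n j * bB F n j' = bB F n j * aB F n j' := by
  have h2 := brel (F := F) (BRel.ab j j' h); rwa [map_mul, map_mul] at h2

lemma bb_zero {j j' : Fin (n-1)} (h : (j' : ℕ) = (j : ℕ) + 1) :
    bB F n j * bB F n j' = 0 := by
  have h2 := brel (F := F) (BRel.bb j j' h); rwa [map_mul, map_zero] at h2

lemma eB_congr {i i' : Fin n} (h : i.val = i'.val) : eB F n i = eB F n i' := by
  congr 1; exact Fin.ext h

lemma aB_congr {k k' : Fin (n-1)} (h : k.val = k'.val) : aB F n k = aB F n k' := by
  congr 1; exact Fin.ext h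

lemma bB_congr {k k' : Fin (n-1)} (h : k.val = k'.val) : bB F n k = bB F n k' := by
  congr 1; exact Fin.ext h

/-- The product `a_s a_{s+1} ... a_{s+m-1}`. -/
def aProd (F : Type) [Field F] (n : ℕ) (s m : ℕ) (h : s + m ≤ n - 1) : Bn F n :=
  ((List.finRange m).map fun t => aB F n ⟨s + t.val, by have := t.isLt; omega⟩).prod

lemma aProd_congr {s s' m m' : ℕ} {h : s + m ≤ n - 1} {h' : s' + m' ≤ n - 1}
    (hs : s = s') (hm : m = m') : aProd F n s m h = aProd F n s' m' h' := by
  subst hs; subst hm; rfl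

lemma aProd_zero (s : ℕ) (h : s + 0 ≤ n - 1) : aProd F n s 0 h = 1 := by
  simp [aProd]

lemma aProd_succ (s m : ℕ) (h : s + (m+1) ≤ n - 1) :
    aProd F n s (m+1) h = aB F n ⟨s, by omega⟩ * aProd F n (s+1) m (by omega) := by
  rw [aProd, List.finRange_succ, List.map_cons, List.prod_cons, List.map_map]
  refine congrArg₂ (· * ·) (aB_congr (show s + (0 : Fin (m+1)).val = s from rfl)) ?_
  rw [aProd]
  refine congrArg List.prod (List.map_congr_left fun t _ => ?_)
  exact aB_congr (show s + (Fin.succ t).val = s + 1 + t.val by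
    simp only [Fin.val_succ]; omega)

lemma aProd_concat (s m : ℕ) (h : s + (m+1) ≤ n - 1) :
    aProd F n s (m+1) h = aProd F n s m (by omega) * aB F n ⟨s + m, by omega⟩ := by
  induction m generalizing s with
  | zero =>
    rw [aProd_succ, aProd_zero, aProd_zero, mul_one, one_mul]
    exact aB_congr (show s = s + 0 by omega)
  | succ m ih =>
    rw [aProd_succ s (m+1) h, ih (s+1) (by omega), ← mul_assoc,
      aProd_succ s m (by omega)]
    exact congrArg₂ (· * ·) rfl (aB_congr (show s + 1 + m = s + (m+1) by omega))

lemma aProd_mul_e (s m : ℕ) (h : s + m ≤ n - 1) (hm : 0 < m) (i : Fin n)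
    (hi : i.val = s + m) : aProd F n s m h * eB F n i = aProd F n s m h := by
  obtain ⟨m', rfl⟩ : ∃ m', m = m' + 1 := ⟨m - 1, by omega⟩
  have hidx : i = hiIdx (⟨s + m', by omega⟩ : Fin (n-1)) :=
    Fin.ext (show i.val = s + m' + 1 by omega)
  rw [aProd_concat, mul_assoc, hidx, ae_eq]

lemma aProd_mul_e_ne (s m : ℕ) (h : s + m ≤ n - 1) (hm : 0 < m) (i : Fin n)
    (hi : i.val ≠ s + m) : aProd F n s m h * eB F n i = 0 := by
  obtain ⟨m', rfl⟩ : ∃ m', m = m' + 1 := ⟨m - 1, by omega⟩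
  have hidx : i ≠ hiIdx (⟨s + m', by omega⟩ : Fin (n-1)) := by
    intro hcon; apply hi
    rw [hcon]; show s + m' + 1 = s + (m' + 1); omega
  rw [aProd_concat, mul_assoc, ae_ne hidx, mul_zero]

lemma e_mul_aProd (s m : ℕ) (h : s + m ≤ n - 1) (hm : 0 < m) (i : Fin n)
    (hi : i.val = s) : eB F n i * aProd F n s m h = aProd F n s m h := by
  obtain ⟨m', rfl⟩ : ∃ m', m = m' + 1 := ⟨m - 1, by omega⟩
  have hidx : i = loIdx (⟨s, by omega⟩ : Fin (n-1)) := Fin.ext hi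
  rw [aProd_succ, ← mul_assoc, hidx, ea_eq]

lemma e_mul_aProd_ne (s m : ℕ) (h : s + m ≤ n - 1) (hm : 0 < m) (i : Fin n)
    (hi : i.val ≠ s) : eB F n i * aProd F n s m h = 0 := by
  obtain ⟨m', rfl⟩ : ∃ m', m = m' + 1 := ⟨m - 1, by omega⟩
  have hidx : i ≠ loIdx (⟨s, by omega⟩ : Fin (n-1)) := by
    intro hcon; exact hi (congrArg Fin.val hcon)
  rw [aProd_succ, ← mul_assoc, ea_ne hidx, zero_mul]

lemma aProd_mul_a (s m : ℕ) (h : s + m ≤ n - 1) (k : Fin (n-1)) (hk : k.val = s + m) :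
    aProd F n s m h * aB F n k = aProd F n s (m+1) (by have := k.isLt; omega) := by
  have hk' : aB F n k = aB F n ⟨s + m, by have := k.isLt; omega⟩ := aB_congr hk
  rw [hk', ← aProd_concat s m (by have := k.isLt; omega)]

lemma aProd_mul_a_ne (s m : ℕ) (h : s + m ≤ n - 1) (hm : 0 < m) (k : Fin (n-1))
    (hk : k.val ≠ s + m) : aProd F n s m h * aB F n k = 0 := by
  rw [← ea_eq k, ← mul_assoc, aProd_mul_e_ne s m h hm (loIdx k) hk, zero_mul]

lemma aProd_mul_b (s m : ℕ) (h : s + m ≤ n - 1) (k : Fin (n-1)) (hk : k.val = s + m) :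
    aProd F n s m h * bB F n k =
      bB F n ⟨s, by have := k.isLt; omega⟩ *
        aProd F n (s+1) m (by have := k.isLt; omega) := by
  induction m generalizing s with
  | zero =>
    rw [aProd_zero, aProd_zero, one_mul, mul_one]
    exact bB_congr (show k.val = s by omega)
  | succ m ih =>
    have hlt := k.isLt
    rw [aProd_succ s m h, mul_assoc, ih (s+1) (by omega) (by omega), ← mul_assoc,
      ab_comm (j := ⟨s, by omega⟩) (j' := ⟨s+1, by omega⟩) rfl,
      mul_assoc, ← aProd_succ (s+1) m (by omega)]

lemma aProd_mul_b_ne (s m : ℕ) (h : s + m ≤ n - 1) (hm : 0 < m) (k : Fin (n-1))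
    (hk : k.val ≠ s + m) : aProd F n s m h * bB F n k = 0 := by
  rw [← eb_eq k, ← mul_assoc, aProd_mul_e_ne s m h hm (loIdx k) hk, zero_mul]


lemma bchain_mul_e (s : ℕ) (hs : s < n - 1) (m : ℕ) (h : s + 1 + m ≤ n - 1) (i : Fin n)
    (hi : i.val = s + 1 + m) :
    bB F n ⟨s, hs⟩ * aProd F n (s+1) m h * eB F n i =
      bB F n ⟨s, hs⟩ * aProd F n (s+1) m h := by
  cases m with
  | zero =>
    simp only [aProd_zero, mul_one]
    have hidx : i = hiIdx (⟨s, hs⟩ : Fin (n-1)) := Fin.ext (show i.val = s + 1 by omega)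
    rw [hidx, be_eq]
  | succ m => rw [mul_assoc, aProd_mul_e (s+1) (m+1) h (by omega) i (by omega)]

lemma bchain_mul_e_ne (s : ℕ) (hs : s < n - 1) (m : ℕ) (h : s + 1 + m ≤ n - 1) (i : Fin n)
    (hi : i.val ≠ s + 1 + m) :
    bB F n ⟨s, hs⟩ * aProd F n (s+1) m h * eB F n i = 0 := by
  cases m with
  | zero =>
    simp only [aProd_zero, mul_one]
    rw [be_ne (show i ≠ hiIdx (⟨s, hs⟩ : Fin (n-1)) from fun hcon => hi (by rw [hcon]; rfl))]
  | succ m => rw [mul_assoc, aProd_mul_e_ne (s+1) (m+1) h (by omega) i (by omega), mul_zero]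

lemma bchain_mul_a (s : ℕ) (hs : s < n - 1) (m : ℕ) (h : s + 1 + m ≤ n - 1)
    (k' : Fin (n-1)) (hk' : k'.val = s + 1 + m) :
    bB F n ⟨s, hs⟩ * aProd F n (s+1) m h * aB F n k' =
      bB F n ⟨s, hs⟩ * aProd F n (s+1) (m+1) (by have := k'.isLt; omega) := by
  rw [mul_assoc, aProd_mul_a (s+1) m h k' (by omega)]

lemma bchain_mul_a_ne (s : ℕ) (hs : s < n - 1) (m : ℕ) (h : s + 1 + m ≤ n - 1)
    (k' : Fin (n-1)) (hk' : k'.val ≠ s + 1 + m) :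
    bB F n ⟨s, hs⟩ * aProd F n (s+1) m h * aB F n k' = 0 := by
  cases m with
  | zero =>
    simp only [aProd_zero, mul_one]
    rw [← ea_eq k', ← mul_assoc,
      be_ne (show loIdx k' ≠ hiIdx (⟨s, hs⟩ : Fin (n-1)) from fun hcon => hk' (by
        have h2 := congrArg Fin.val hcon
        simp only [loIdx, hiIdx] at h2
        omega)), zero_mul]
  | succ m => rw [mul_assoc, aProd_mul_a_ne (s+1) (m+1) h (by omega) k' (by omega), mul_zero]

lemma bchain_mul_b (s : ℕ) (hs : s < n - 1) (m : ℕ) (h : s + 1 + m ≤ n - 1)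
    (k' : Fin (n-1)) (hk' : k'.val = s + 1 + m) :
    bB F n ⟨s, hs⟩ * aProd F n (s+1) m h * bB F n k' = 0 := by
  rw [mul_assoc, aProd_mul_b (s+1) m h k' (by omega), ← mul_assoc,
    bb_zero (j := ⟨s, hs⟩) (j' := ⟨s+1, by have := k'.isLt; omega⟩) rfl, zero_mul]

lemma bchain_mul_b_ne (s : ℕ) (hs : s < n - 1) (m : ℕ) (h : s + 1 + m ≤ n - 1)
    (k' : Fin (n-1)) (hk' : k'.val ≠ s + 1 + m) :
    bB F n ⟨s, hs⟩ * aProd F n (s+1) m h * bB F n k' = 0 := by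
  cases m with
  | zero =>
    simp only [aProd_zero, mul_one]
    rw [← eb_eq k', ← mul_assoc,
      be_ne (show loIdx k' ≠ hiIdx (⟨s, hs⟩ : Fin (n-1)) from fun hcon => hk' (by
        have h2 := congrArg Fin.val hcon
        simp only [loIdx, hiIdx] at h2
        omega)), zero_mul]
  | succ m => rw [mul_assoc, aProd_mul_b_ne (s+1) (m+1) h (by omega) k' (by omega), mul_zero]

lemma aPath_def (i j : Fin n) :
    aPath F n i j = aProd F n i.val (j.val - i.val)
      (by have := i.isLt; have := j.isLt; omega) := rfl

lemma bPath_def (i j : Fin n) (hij : i < j) :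
    bPath F n i j hij =
      bB F n ⟨i.val, by have h1 : i.val < j.val := hij; have := j.isLt; omega⟩ *
        aProd F n (i.val + 1) (j.val - i.val - 1)
          (by have h1 : i.val < j.val := hij; have := j.isLt; omega) := rfl

lemma aProd_eq_aPath (i j : Fin n) (m : ℕ) (h : i.val + m ≤ n - 1)
    (hm : m = j.val - i.val) : aProd F n i.val m h = aPath F n i j := by
  rw [aPath_def]; exact aProd_congr rfl hm

lemma bProd_eq_bPath (i j : Fin n) (hij : i < j) (m : ℕ) (h1 : i.val < n - 1)
    (h2 : i.val + 1 + m ≤ n - 1) (hm : m = j.val - i.val - 1) :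
    bB F n ⟨i.val, h1⟩ * aProd F n (i.val + 1) m h2 = bPath F n i j hij := by
  rw [bPath_def]
  exact congrArg₂ (· * ·) (bB_congr rfl) (aProd_congr rfl hm)

lemma lo_lt_hi (k : Fin (n-1)) : loIdx k < hiIdx k := by
  simp [loIdx, hiIdx, Fin.lt_def]

lemma eB_mem_range (i : Fin n) : eB F n i ∈ Set.range (bFam F n) := ⟨Sum.inl i, rfl⟩

lemma aPath_mem_range {i j : Fin n} (hij : i < j) :
    aPath F n i j ∈ Set.range (bFam F n) := ⟨Sum.inr (Sum.inl ⟨(i, j), hij⟩), rfl⟩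

lemma bPath_mem_range {i j : Fin n} (hij : i < j) :
    bPath F n i j hij ∈ Set.range (bFam F n) := ⟨Sum.inr (Sum.inr ⟨(i, j), hij⟩), rfl⟩

lemma aB_eq_aPath (k : Fin (n-1)) : aPath F n (loIdx k) (hiIdx k) = aB F n k := by
  rw [aPath_def,
    aProd_congr (h' := show (loIdx k).val + 1 ≤ n - 1 by
        have := k.isLt; show k.val + 1 ≤ n - 1; omega) rfl
      (show (hiIdx k).val - (loIdx k).val = 1 by show k.val + 1 - k.val = 1; omega),
    aProd_succ, aProd_zero, mul_one]
  exact aB_congr rfl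

lemma bB_eq_bPath (k : Fin (n-1)) :
    bPath F n (loIdx k) (hiIdx k) (lo_lt_hi k) = bB F n k := by
  rw [bPath_def,
    aProd_congr (h' := show (loIdx k).val + 1 + 0 ≤ n - 1 by
        have := k.isLt; show k.val + 1 + 0 ≤ n - 1; omega) rfl
      (show (hiIdx k).val - (loIdx k).val - 1 = 0 by
        show k.val + 1 - k.val - 1 = 0; omega),
    aProd_zero, mul_one]
  exact bB_congr rfl

lemma fam_mul_gen (idx : BIdx n) (g : BGen n) :
    bFam F n idx * RingQuot.mkAlgHom F (BRel F n) (FreeAlgebra.ι F g) ∈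
      Submodule.span F (Set.range (bFam F n)) := by
  obtain i | ⟨⟨i, j⟩, hij⟩ | ⟨⟨i, j⟩, hij⟩ := idx
  · -- idempotent times generator
    cases g with
    | e k =>
      show eB F n i * eB F n k ∈ _
      by_cases h : i = k
      · subst h; rw [ee_self]; exact Submodule.subset_span (eB_mem_range i)
      · rw [ee_ne h]; exact zero_mem _
    | a k =>
      show eB F n i * aB F n k ∈ _
      by_cases h : i = loIdx k
      · rw [h, ea_eq, ← aB_eq_aPath]
        exact Submodule.subset_span (aPath_mem_range (lo_lt_hi k))
      · rw [ea_ne h]; exact zero_mem _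
    | b k =>
      show eB F n i * bB F n k ∈ _
      by_cases h : i = loIdx k
      · rw [h, eb_eq, ← bB_eq_bPath]
        exact Submodule.subset_span (bPath_mem_range (lo_lt_hi k))
      · rw [eb_ne h]; exact zero_mem _
  · -- a-path times generator
    have hij' : i.val < j.val := hij
    have hjn : j.val < n := j.isLt
    cases g with
    | e k =>
      show aPath F n i j * eB F n k ∈ _
      by_cases h : k.val = j.val
      · rw [aPath_def, aProd_mul_e i.val (j.val - i.val) (by omega) (by omega) k (by omega),
          ← aPath_def]
        exact Submodule.subset_span (aPath_mem_range hij)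
      · rw [aPath_def, aProd_mul_e_ne i.val (j.val - i.val) (by omega) (by omega) k (by omega)]
        exact zero_mem _
    | a k =>
      show aPath F n i j * aB F n k ∈ _
      by_cases h : k.val = j.val
      · have hjn1 : j.val < n - 1 := by have := k.isLt; omega
        rw [aPath_def, aProd_mul_a i.val (j.val - i.val) (by omega) k (by omega),
          aProd_eq_aPath i ⟨j.val + 1, by omega⟩ _ _ (by show _ = j.val + 1 - i.val; omega)]
        exact Submodule.subset_span (aPath_mem_range (show i < ⟨j.val + 1, by omega⟩ by
          rw [Fin.lt_def]; show i.val < j.val + 1; omega))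
      · rw [aPath_def, aProd_mul_a_ne i.val (j.val - i.val) (by omega) (by omega) k (by omega)]
        exact zero_mem _
    | b k =>
      show aPath F n i j * bB F n k ∈ _
      by_cases h : k.val = j.val
      · have hjn1 : j.val < n - 1 := by have := k.isLt; omega
        rw [aPath_def, aProd_mul_b i.val (j.val - i.val) (by omega) k (by omega),
          bProd_eq_bPath i ⟨j.val + 1, by omega⟩
            (show i < ⟨j.val + 1, by omega⟩ by rw [Fin.lt_def]; show i.val < j.val + 1; omega)
            _ _ _ (by show _ = j.val + 1 - i.val - 1; omega)]
        exact Submodule.subset_span (bPath_mem_range _)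
      · rw [aPath_def, aProd_mul_b_ne i.val (j.val - i.val) (by omega) (by omega) k (by omega)]
        exact zero_mem _
  · -- b-path times generator
    have hij' : i.val < j.val := hij
    have hjn : j.val < n := j.isLt
    cases g with
    | e k =>
      show bPath F n i j hij * eB F n k ∈ _
      by_cases h : k.val = j.val
      · rw [bPath_def, bchain_mul_e i.val (by omega) (j.val - i.val - 1) (by omega) k (by omega),
          ← bPath_def i j hij]
        exact Submodule.subset_span (bPath_mem_range hij)
      · rw [bPath_def, bchain_mul_e_ne i.val (by omega) (j.val - i.val - 1) (by omega) k (by omega)]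
        exact zero_mem _
    | a k =>
      show bPath F n i j hij * aB F n k ∈ _
      by_cases h : k.val = j.val
      · have hjn1 : j.val < n - 1 := by have := k.isLt; omega
        rw [bPath_def, bchain_mul_a i.val (by omega) (j.val - i.val - 1) (by omega) k (by omega),
          bProd_eq_bPath i ⟨j.val + 1, by omega⟩
            (show i < ⟨j.val + 1, by omega⟩ by rw [Fin.lt_def]; show i.val < j.val + 1; omega)
            _ _ _ (by show _ = j.val + 1 - i.val - 1; omega)]
        exact Submodule.subset_span (bPath_mem_range _)
      · rw [bPath_def, bchain_mul_a_ne i.val (by omega) (j.val - i.val - 1) (by omega) k (by omega)]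
        exact zero_mem _
    | b k =>
      show bPath F n i j hij * bB F n k ∈ _
      by_cases h : k.val = j.val
      · rw [bPath_def, bchain_mul_b i.val (by omega) (j.val - i.val - 1) (by omega) k (by omega)]
        exact zero_mem _
      · rw [bPath_def, bchain_mul_b_ne i.val (by omega) (j.val - i.val - 1) (by omega) k (by omega)]
        exact zero_mem _

lemma one_mem_span : (1 : Bn F n) ∈ Submodule.span F (Set.range (bFam F n)) := by
  rw [← sum_e]
  exact Submodule.sum_mem _ fun i _ => Submodule.subset_span (eB_mem_range i)

lemma span_top : Submodule.span F (Set.range (bFam F n)) = ⊤ := by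
  rw [Submodule.eq_top_iff']
  intro z
  obtain ⟨x, rfl⟩ := RingQuot.mkAlgHom_surjective F (BRel F n) z
  have key : ∀ x : FreeAlgebra F (BGen n), ∀ y ∈ Submodule.span F (Set.range (bFam F n)),
      y * RingQuot.mkAlgHom F (BRel F n) x ∈ Submodule.span F (Set.range (bFam F n)) := by
    intro x
    induction x using FreeAlgebra.induction with
    | grade0 r =>
      intro y hy
      rw [AlgHom.commutes, ← Algebra.commutes, ← Algebra.smul_def]
      exact Submodule.smul_mem _ r hy
    | grade1 g =>
      intro y hy
      refine Submodule.span_induction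
        (p := fun z _ => z * RingQuot.mkAlgHom F (BRel F n) (FreeAlgebra.ι F g) ∈
          Submodule.span F (Set.range (bFam F n))) ?_ ?_ ?_ ?_ hy
      · rintro v ⟨idx, rfl⟩
        exact fam_mul_gen idx g
      · simp only [zero_mul]; exact zero_mem _
      · intro u v _ _ hu hv; simp only [add_mul]; exact add_mem hu hv
      · intro c u _ hu; simp only [smul_mul_assoc]; exact Submodule.smul_mem _ c hu
    | mul x₁ x₂ h₁ h₂ =>
      intro y hy
      rw [map_mul, ← mul_assoc]
      exact h₂ _ (h₁ _ hy)
    | add x₁ x₂ h₁ h₂ =>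
      intro y hy
      rw [map_add, mul_add]
      exact add_mem (h₁ _ hy) (h₂ _ hy)
  simpa using key x 1 one_mem_span


lemma std_congr {i i' j j' : Fin n} (c : DualNumber F) (hi : i.val = i'.val)
    (hj : j.val = j'.val) :
    Matrix.single i j c = Matrix.single i' j' c := by
  rw [Fin.ext hi, Fin.ext hj]

lemma one_eq_sum_std :
    (1 : Matrix (Fin n) (Fin n) (DualNumber F)) =
      ∑ i : Fin n, Matrix.single i i 1 := by
  refine Matrix.ext fun p q => ?_
  rw [Matrix.sum_apply, Finset.sum_eq_single p]
  · by_cases h : q = p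
    · subst h; simp [Matrix.one_apply]
    · rw [Matrix.single_apply_of_ne, Matrix.one_apply_ne (Ne.symm h)]
      tauto
  · intro i _ hip
    exact Matrix.single_apply_of_ne _ _ _ _ _ (by tauto)
  · simp

/-- The images of the generators in the matrix model. -/
def genMat (F : Type) [Field F] (n : ℕ) : BGen n → Matrix (Fin n) (Fin n) (DualNumber F)
  | .e i => Matrix.single i i 1
  | .a j => Matrix.single (loIdx j) (hiIdx j) 1
  | .b j => Matrix.single (loIdx j) (hiIdx j) DualNumber.eps

lemma genMat_rel : ∀ ⦃x y : FreeAlgebra F (BGen n)⦄, BRel F n x y →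
    FreeAlgebra.lift F (genMat F n) x = FreeAlgebra.lift F (genMat F n) y := by
  intro x y h
  cases h with
  | ee_idem i =>
    simp only [ge, map_mul, FreeAlgebra.lift_ι_apply, genMat]
    rw [Matrix.single_mul_single_same, one_mul]
  | ee_orth i i' hii =>
    simp only [ge, map_mul, map_zero, FreeAlgebra.lift_ι_apply, genMat]
    rw [Matrix.single_mul_single_of_ne (h := hii)]
  | sum_one =>
    simp only [ge, map_sum, map_one, FreeAlgebra.lift_ι_apply, genMat]
    exact one_eq_sum_std.symm
  | ea_eq j =>
    simp only [ge, ga, map_mul, FreeAlgebra.lift_ι_apply, genMat]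
    rw [Matrix.single_mul_single_same, one_mul]
  | ea_ne i j hij =>
    simp only [ge, ga, map_mul, map_zero, FreeAlgebra.lift_ι_apply, genMat]
    rw [Matrix.single_mul_single_of_ne (h := hij)]
  | ae_eq j =>
    simp only [ge, ga, map_mul, FreeAlgebra.lift_ι_apply, genMat]
    rw [Matrix.single_mul_single_same, mul_one]
  | ae_ne i j hij =>
    simp only [ge, ga, map_mul, map_zero, FreeAlgebra.lift_ι_apply, genMat]
    rw [Matrix.single_mul_single_of_ne (h := Ne.symm hij)]
  | eb_eq j =>
    simp only [ge, gb, map_mul, FreeAlgebra.lift_ι_apply, genMat]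
    rw [Matrix.single_mul_single_same, one_mul]
  | eb_ne i j hij =>
    simp only [ge, gb, map_mul, map_zero, FreeAlgebra.lift_ι_apply, genMat]
    rw [Matrix.single_mul_single_of_ne (h := hij)]
  | be_eq j =>
    simp only [ge, gb, map_mul, FreeAlgebra.lift_ι_apply, genMat]
    rw [Matrix.single_mul_single_same, mul_one]
  | be_ne i j hij =>
    simp only [ge, gb, map_mul, map_zero, FreeAlgebra.lift_ι_apply, genMat]
    rw [Matrix.single_mul_single_of_ne (h := Ne.symm hij)]
  | ab j j' hjj =>
    simp only [ga, gb, map_mul, FreeAlgebra.lift_ι_apply, genMat]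
    rw [show loIdx j' = hiIdx j from Fin.ext (by show j'.val = j.val + 1; omega),
      Matrix.single_mul_single_same, Matrix.single_mul_single_same, one_mul, mul_one]
  | bb j j' hjj =>
    simp only [gb, map_mul, map_zero, FreeAlgebra.lift_ι_apply, genMat]
    rw [show loIdx j' = hiIdx j from Fin.ext (by show j'.val = j.val + 1; omega),
      Matrix.single_mul_single_same, DualNumber.eps_mul_eps, Matrix.single_zero]

/-- The representation of `B` on the matrix model. -/
def phiA (F : Type) [Field F] (n : ℕ) : Bn F n →ₐ[F] Matrix (Fin n) (Fin n) (DualNumber F) :=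
  RingQuot.liftAlgHom F ⟨FreeAlgebra.lift F (genMat F n), genMat_rel⟩

lemma phiA_mk (x : FreeAlgebra F (BGen n)) :
    phiA F n (RingQuot.mkAlgHom F (BRel F n) x) = FreeAlgebra.lift F (genMat F n) x :=
  RingQuot.liftAlgHom_mkAlgHom_apply _ _ _ _

lemma phi_eB (i : Fin n) : phiA F n (eB F n i) = Matrix.single i i 1 := by
  refine (phiA_mk (ge F n i)).trans ?_
  simp [ge, genMat]

lemma phi_aB (k : Fin (n-1)) :
    phiA F n (aB F n k) = Matrix.single (loIdx k) (hiIdx k) 1 := by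
  refine (phiA_mk (ga F n k)).trans ?_
  simp [ga, genMat]

lemma phi_bB (k : Fin (n-1)) :
    phiA F n (bB F n k) = Matrix.single (loIdx k) (hiIdx k) DualNumber.eps := by
  refine (phiA_mk (gb F n k)).trans ?_
  simp [gb, genMat]

lemma phi_aProd (s m : ℕ) (h : s + (m+1) ≤ n - 1) :
    phiA F n (aProd F n s (m+1) h) =
      Matrix.single ⟨s, by omega⟩ ⟨s + (m+1), by omega⟩ 1 := by
  induction m generalizing s with
  | zero =>
    rw [aProd_succ, aProd_zero, mul_one]
    exact phi_aB ⟨s, by omega⟩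
  | succ m ih =>
    rw [aProd_succ s (m+1) h, map_mul, phi_aB ⟨s, by omega⟩, ih (s+1) (by omega)]
    refine Eq.trans (congrArg₂ (· * ·)
      (std_congr (i' := ⟨s, by omega⟩) (j' := ⟨s+1, by omega⟩) 1 rfl rfl) rfl) ?_
    beta_reduce
    rw [Matrix.single_mul_single_same, one_mul]
    exact std_congr _ rfl (show s + 1 + (m+1) = s + (m+1+1) by omega)

lemma phi_bchain (s : ℕ) (hs : s < n - 1) (m : ℕ) (h : s + 1 + m ≤ n - 1) :
    phiA F n (bB F n ⟨s, hs⟩ * aProd F n (s+1) m h) =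
      Matrix.single ⟨s, by omega⟩ ⟨s + 1 + m, by omega⟩ DualNumber.eps := by
  cases m with
  | zero =>
    rw [aProd_zero, mul_one]
    exact phi_bB ⟨s, hs⟩
  | succ m =>
    rw [map_mul, phi_bB ⟨s, hs⟩, phi_aProd (s+1) m h]
    refine Eq.trans (congrArg₂ (· * ·)
      (std_congr (i' := ⟨s, by omega⟩) (j' := ⟨s+1, by omega⟩) DualNumber.eps rfl rfl) rfl) ?_
    beta_reduce
    rw [Matrix.single_mul_single_same, mul_one]

/-- The matrix model of the claimed basis. -/
def matFam (F : Type) [Field F] (n : ℕ) : BIdx n → Matrix (Fin n) (Fin n) (DualNumber F)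
  | .inl i => Matrix.single i i 1
  | .inr (.inl p) => Matrix.single p.1.1 p.1.2 1
  | .inr (.inr p) => Matrix.single p.1.1 p.1.2 DualNumber.eps

lemma phi_fam (idx : BIdx n) : phiA F n (bFam F n idx) = matFam F n idx := by
  obtain i | ⟨⟨i, j⟩, hij⟩ | ⟨⟨i, j⟩, hij⟩ := idx
  · exact phi_eB i
  · show phiA F n (aPath F n i j) = Matrix.single i j 1
    have hij' : i.val < j.val := hij
    have hjn : j.val < n := j.isLt
    rw [aPath_def,
      aProd_congr (h' := show i.val + (j.val - i.val - 1 + 1) ≤ n - 1 by omega) rfl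
        (show j.val - i.val = j.val - i.val - 1 + 1 by omega),
      phi_aProd]
    exact std_congr _ rfl (show i.val + (j.val - i.val - 1 + 1) = j.val by omega)
  · show phiA F n (bPath F n i j hij) = Matrix.single i j DualNumber.eps
    have hij' : i.val < j.val := hij
    have hjn : j.val < n := j.isLt
    rw [bPath_def, phi_bchain i.val (by omega) (j.val - i.val - 1) (by omega)]
    exact std_congr _ rfl (show i.val + 1 + (j.val - i.val - 1) = j.val by omega)


lemma matFam_li : LinearIndependent F (matFam F n) := by
  rw [Fintype.linearIndependent_iff]
  intro c hc
  have entry : ∀ p q : Fin n, ∑ idx : BIdx n, c idx • matFam F n idx p q = 0 := by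
    intro p q
    have h := congrFun (congrFun hc p) q
    rw [Matrix.sum_apply] at h
    simpa [Matrix.smul_apply] using h
  have keydiag : ∀ i : Fin n, c (Sum.inl i) • (1 : DualNumber F) = 0 := by
    intro i
    have h := entry i i
    rw [Fintype.sum_sum_type, Fintype.sum_sum_type] at h
    have h1 : ∑ i' : Fin n, c (Sum.inl i') • matFam F n (Sum.inl i') i i =
        c (Sum.inl i) • (1 : DualNumber F) := by
      rw [Finset.sum_eq_single i]
      · show c (Sum.inl i) • Matrix.single i i (1 : DualNumber F) i i = _
        rw [Matrix.single_apply_same]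
      · intro b _ hb
        show c (Sum.inl b) • Matrix.single b b (1 : DualNumber F) i i = 0
        rw [Matrix.single_apply_of_ne _ _ _ _ _
          (fun hh => hb hh.1), smul_zero]
      · intro hni; exact absurd (Finset.mem_univ i) hni
    have h2 : ∑ p : {p : Fin n × Fin n // p.1 < p.2},
        c (Sum.inr (Sum.inl p)) • matFam F n (Sum.inr (Sum.inl p)) i i = 0 := by
      apply Finset.sum_eq_zero
      rintro ⟨⟨a, b⟩, hab⟩ _
      show _ • Matrix.single a b (1 : DualNumber F) i i = 0
      rw [Matrix.single_apply_of_ne _ _ _ _ _ ?_, smul_zero]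
      rintro ⟨ha, hb⟩
      rw [ha, hb] at hab
      exact lt_irrefl i hab
    have h3 : ∑ p : {p : Fin n × Fin n // p.1 < p.2},
        c (Sum.inr (Sum.inr p)) • matFam F n (Sum.inr (Sum.inr p)) i i = 0 := by
      apply Finset.sum_eq_zero
      rintro ⟨⟨a, b⟩, hab⟩ _
      show _ • Matrix.single a b DualNumber.eps i i = 0
      rw [Matrix.single_apply_of_ne _ _ _ _ _ ?_, smul_zero]
      rintro ⟨ha, hb⟩
      rw [ha, hb] at hab
      exact lt_irrefl i hab
    rw [h1, h2, h3, add_zero, add_zero] at h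
    exact h
  have keyoff : ∀ (i j : Fin n) (hij : i < j),
      c (Sum.inr (Sum.inl ⟨(i, j), hij⟩)) • (1 : DualNumber F) +
        c (Sum.inr (Sum.inr ⟨(i, j), hij⟩)) • DualNumber.eps = 0 := by
    intro i j hij
    have hne : i ≠ j := ne_of_lt hij
    have h := entry i j
    rw [Fintype.sum_sum_type, Fintype.sum_sum_type] at h
    have h1 : ∑ i' : Fin n, c (Sum.inl i') • matFam F n (Sum.inl i') i j = 0 := by
      apply Finset.sum_eq_zero
      intro b _
      show c (Sum.inl b) • Matrix.single b b (1 : DualNumber F) i j = 0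
      rw [Matrix.single_apply_of_ne _ _ _ _ _ ?_, smul_zero]
      rintro ⟨ha, hb⟩
      exact hne (ha.symm.trans hb)
    have h2 : ∑ p : {p : Fin n × Fin n // p.1 < p.2},
        c (Sum.inr (Sum.inl p)) • matFam F n (Sum.inr (Sum.inl p)) i j =
        c (Sum.inr (Sum.inl ⟨(i, j), hij⟩)) • (1 : DualNumber F) := by
      rw [Finset.sum_eq_single (⟨(i, j), hij⟩ : {p : Fin n × Fin n // p.1 < p.2})]
      · show _ • Matrix.single i j (1 : DualNumber F) i j = _
        rw [Matrix.single_apply_same]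
      · rintro ⟨⟨a, b⟩, hab⟩ _ hb
        show _ • Matrix.single a b (1 : DualNumber F) i j = 0
        rw [Matrix.single_apply_of_ne _ _ _ _ _ ?_, smul_zero]
        rintro ⟨ha', hb'⟩
        exact hb (by subst ha'; subst hb'; rfl)
      · intro hni; exact absurd (Finset.mem_univ _) hni
    have h3 : ∑ p : {p : Fin n × Fin n // p.1 < p.2},
        c (Sum.inr (Sum.inr p)) • matFam F n (Sum.inr (Sum.inr p)) i j =
        c (Sum.inr (Sum.inr ⟨(i, j), hij⟩)) • DualNumber.eps := by
      rw [Finset.sum_eq_single (⟨(i, j), hij⟩ : {p : Fin n × Fin n // p.1 < p.2})]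
      · show _ • Matrix.single i j DualNumber.eps i j = _
        rw [Matrix.single_apply_same]
      · rintro ⟨⟨a, b⟩, hab⟩ _ hb
        show _ • Matrix.single a b DualNumber.eps i j = 0
        rw [Matrix.single_apply_of_ne _ _ _ _ _ ?_, smul_zero]
        rintro ⟨ha', hb'⟩
        exact hb (by subst ha'; subst hb'; rfl)
      · intro hni; exact absurd (Finset.mem_univ _) hni
    rw [h1, h2, h3, zero_add] at h
    exact h
  intro idx
  obtain i | ⟨⟨i, j⟩, hij⟩ | ⟨⟨i, j⟩, hij⟩ := idx
  · have h := keydiag i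
    simpa using congrArg TrivSqZeroExt.fst h
  · have h := keyoff i j hij
    simpa using congrArg TrivSqZeroExt.fst h
  · have h := keyoff i j hij
    simpa using congrArg TrivSqZeroExt.snd h

lemma fam_li : LinearIndependent F (bFam F n) := by
  refine LinearIndependent.of_comp (phiA F n).toLinearMap ?_
  have hcomp : (⇑(phiA F n).toLinearMap ∘ bFam F n) = matFam F n :=
    funext fun idx => phi_fam idx
  rw [hcomp]
  exact matFam_li

/-- The claimed family as a basis. -/
def basisB : Module.Basis (BIdx n) F (Bn F n) :=
  Module.Basis.mk fam_li (by rw [span_top])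

/-- The pairs `i < j` are counted by `Σ_j j`. -/
def pairEquiv : {p : Fin n × Fin n // p.1 < p.2} ≃ (Σ j : Fin n, Fin j.val) where
  toFun p := ⟨p.1.2, ⟨p.1.1.val, p.2⟩⟩
  invFun x := ⟨(⟨x.2.val, by have := x.2.isLt; have := x.1.isLt; omega⟩, x.1), x.2.isLt⟩
  left_inv p := rfl
  right_inv x := rfl

lemma card_BIdx : Fintype.card (BIdx n) = n ^ 2 := by
  have hP : Fintype.card {p : Fin n × Fin n // p.1 < p.2} = ∑ i ∈ Finset.range n, i := by
    rw [Fintype.card_congr pairEquiv, Fintype.card_sigma]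
    simp only [Fintype.card_fin]
    exact Fin.sum_univ_eq_sum_range (fun i => i) n
  have hgauss := Finset.sum_range_id_mul_two n
  have hfact : n * (n - 1) + n = n ^ 2 := by
    cases n with
    | zero => simp
    | succ m => simp [pow_two, Nat.succ_sub_one]; ring
  rw [Fintype.card_sum, Fintype.card_sum, Fintype.card_fin, hP]
  omega

lemma finrank_Bn : Module.finrank F (Bn F n) = n ^ 2 := by
  rw [Module.finrank_eq_card_basis (basisB (F := F) (n := n)), card_BIdx]


lemma e_mul_bchain (s : ℕ) (hs : s < n - 1) (m : ℕ) (h : s + 1 + m ≤ n - 1) (i : Fin n)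
    (hi : i.val = s) :
    eB F n i * (bB F n ⟨s, hs⟩ * aProd F n (s+1) m h) =
      bB F n ⟨s, hs⟩ * aProd F n (s+1) m h := by
  rw [← mul_assoc, show eB F n i = eB F n (loIdx (⟨s, hs⟩ : Fin (n-1))) from eB_congr hi,
    eb_eq]

lemma e_mul_bchain_ne (s : ℕ) (hs : s < n - 1) (m : ℕ) (h : s + 1 + m ≤ n - 1) (i : Fin n)
    (hi : i.val ≠ s) :
    eB F n i * (bB F n ⟨s, hs⟩ * aProd F n (s+1) m h) = 0 := by
  rw [← mul_assoc,
    eb_ne (show i ≠ loIdx (⟨s, hs⟩ : Fin (n-1)) from fun hcon => hi (congrArg Fin.val hcon)),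
    zero_mul]

lemma stmt4 (i j : Fin n) (hji : j < i) (x : Bn F n) :
    eB F n i * x * eB F n j = 0 := by
  have hx : x ∈ Submodule.span F (Set.range (bFam F n)) := by
    rw [span_top]; exact Submodule.mem_top
  have hji' : j.val < i.val := hji
  refine Submodule.span_induction (p := fun z _ => eB F n i * z * eB F n j = 0)
    ?_ ?_ ?_ ?_ hx
  · rintro v ⟨idx, rfl⟩
    obtain k | ⟨⟨k, l⟩, hkl⟩ | ⟨⟨k, l⟩, hkl⟩ := idx
    · show eB F n i * eB F n k * eB F n j = 0
      by_cases h1 : i = k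
      · subst h1; rw [ee_self, ee_ne (ne_of_gt hji)]
      · rw [ee_ne h1, zero_mul]
    · show eB F n i * aPath F n k l * eB F n j = 0
      have hkl' : k.val < l.val := hkl
      have hln := l.isLt
      rw [aPath_def]
      by_cases h1 : i.val = k.val
      · rw [e_mul_aProd k.val (l.val - k.val) (by omega) (by omega) i h1,
          aProd_mul_e_ne k.val (l.val - k.val) (by omega) (by omega) j (by omega)]
      · rw [e_mul_aProd_ne k.val (l.val - k.val) (by omega) (by omega) i h1, zero_mul]
    · show eB F n i * bPath F n k l hkl * eB F n j = 0
      have hkl' : k.val < l.val := hkl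
      have hln := l.isLt
      rw [bPath_def]
      by_cases h1 : i.val = k.val
      · rw [e_mul_bchain k.val (by omega) (l.val - k.val - 1) (by omega) i h1,
          bchain_mul_e_ne k.val (by omega) (l.val - k.val - 1) (by omega) j (by omega)]
      · rw [e_mul_bchain_ne k.val (by omega) (l.val - k.val - 1) (by omega) i h1, zero_mul]
  · show eB F n i * 0 * eB F n j = 0
    rw [mul_zero, zero_mul]
  · intro u v _ _ hu hv
    have hu' : eB F n i * u * eB F n j = 0 := hu
    have hv' : eB F n i * v * eB F n j = 0 := hv
    show eB F n i * (u + v) * eB F n j = 0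
    rw [mul_add, add_mul, hu', hv', add_zero]
  · intro a u _ hu
    have hu' : eB F n i * u * eB F n j = 0 := hu
    show eB F n i * (a • u) * eB F n j = 0
    rw [mul_smul_comm, smul_mul_assoc, hu', smul_zero]

lemma stmt5 (i : Fin n) (x : Bn F n) :
    ∃ c : F, eB F n i * x * eB F n i = c • eB F n i := by
  have hx : x ∈ Submodule.span F (Set.range (bFam F n)) := by
    rw [span_top]; exact Submodule.mem_top
  have hmem : eB F n i * x * eB F n i ∈ Submodule.span F {eB F n i} := by
    refine Submodule.span_induction
      (p := fun z _ => eB F n i * z * eB F n i ∈ Submodule.span F {eB F n i})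
      ?_ ?_ ?_ ?_ hx
    · rintro v ⟨idx, rfl⟩
      obtain k | ⟨⟨k, l⟩, hkl⟩ | ⟨⟨k, l⟩, hkl⟩ := idx
      · show eB F n i * eB F n k * eB F n i ∈ _
        by_cases h1 : i = k
        · subst h1; rw [ee_self, ee_self]
          exact Submodule.mem_span_singleton_self _
        · rw [ee_ne h1, zero_mul]; exact zero_mem _
      · show eB F n i * aPath F n k l * eB F n i ∈ _
        have hkl' : k.val < l.val := hkl
        have hln := l.isLt
        rw [aPath_def]
        by_cases h1 : i.val = k.val
        · rw [e_mul_aProd k.val (l.val - k.val) (by omega) (by omega) i h1,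
            aProd_mul_e_ne k.val (l.val - k.val) (by omega) (by omega) i (by omega)]
          exact zero_mem _
        · rw [e_mul_aProd_ne k.val (l.val - k.val) (by omega) (by omega) i h1, zero_mul]
          exact zero_mem _
      · show eB F n i * bPath F n k l hkl * eB F n i ∈ _
        have hkl' : k.val < l.val := hkl
        have hln := l.isLt
        rw [bPath_def]
        by_cases h1 : i.val = k.val
        · rw [e_mul_bchain k.val (by omega) (l.val - k.val - 1) (by omega) i h1,
            bchain_mul_e_ne k.val (by omega) (l.val - k.val - 1) (by omega) i (by omega)]
          exact zero_mem _
        · rw [e_mul_bchain_ne k.val (by omega) (l.val - k.val - 1) (by omega) i h1, zero_mul]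
          exact zero_mem _
    · show eB F n i * 0 * eB F n i ∈ _
      rw [mul_zero, zero_mul]; exact zero_mem _
    · intro u v _ _ hu hv
      have hu' : eB F n i * u * eB F n i ∈ Submodule.span F {eB F n i} := hu
      have hv' : eB F n i * v * eB F n i ∈ Submodule.span F {eB F n i} := hv
      show eB F n i * (u + v) * eB F n i ∈ _
      rw [mul_add, add_mul]; exact add_mem hu' hv'
    · intro a u _ hu
      have hu' : eB F n i * u * eB F n i ∈ Submodule.span F {eB F n i} := hu
      show eB F n i * (a • u) * eB F n i ∈ _
      rw [mul_smul_comm, smul_mul_assoc]; exact Submodule.smul_mem _ a hu'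
  obtain ⟨c, hc⟩ := Submodule.mem_span_singleton.mp hmem
  exact ⟨c, hc.symm⟩

lemma stmt6 (i j : Fin n) (hij : i < j) (x : Bn F n) :
    ∃ c c' : F, eB F n i * x * eB F n j =
      c • aPath F n i j + c' • bPath F n i j hij := by
  have hx : x ∈ Submodule.span F (Set.range (bFam F n)) := by
    rw [span_top]; exact Submodule.mem_top
  have hij' : i.val < j.val := hij
  have hmem : eB F n i * x * eB F n j ∈
      Submodule.span F {aPath F n i j, bPath F n i j hij} := by
    refine Submodule.span_induction
      (p := fun z _ => eB F n i * z * eB F n j ∈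
        Submodule.span F {aPath F n i j, bPath F n i j hij})
      ?_ ?_ ?_ ?_ hx
    · rintro v ⟨idx, rfl⟩
      obtain k | ⟨⟨k, l⟩, hkl⟩ | ⟨⟨k, l⟩, hkl⟩ := idx
      · show eB F n i * eB F n k * eB F n j ∈ _
        by_cases h1 : i = k
        · subst h1; rw [ee_self, ee_ne (ne_of_lt hij)]; exact zero_mem _
        · rw [ee_ne h1, zero_mul]; exact zero_mem _
      · show eB F n i * aPath F n k l * eB F n j ∈ _
        have hkl' : k.val < l.val := hkl
        have hln := l.isLt
        by_cases h1 : i.val = k.val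
        · obtain rfl : i = k := Fin.ext h1
          by_cases h2 : j.val = l.val
          · obtain rfl : j = l := Fin.ext h2
            rw [aPath_def i j,
              e_mul_aProd i.val (j.val - i.val) (by omega) (by omega) i rfl,
              aProd_mul_e i.val (j.val - i.val) (by omega) (by omega) j (by omega)]
            exact Submodule.subset_span (Set.mem_insert _ _)
          · rw [aPath_def i l,
              e_mul_aProd i.val (l.val - i.val) (by omega) (by omega) i rfl,
              aProd_mul_e_ne i.val (l.val - i.val) (by omega) (by omega) j (by omega)]
            exact zero_mem _
        · rw [aPath_def k l,
            e_mul_aProd_ne k.val (l.val - k.val) (by omega) (by omega) i h1, zero_mul]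
          exact zero_mem _
      · show eB F n i * bPath F n k l hkl * eB F n j ∈ _
        have hkl' : k.val < l.val := hkl
        have hln := l.isLt
        by_cases h1 : i.val = k.val
        · obtain rfl : i = k := Fin.ext h1
          by_cases h2 : j.val = l.val
          · obtain rfl : j = l := Fin.ext h2
            rw [bPath_def i j hkl,
              e_mul_bchain i.val (by omega) (j.val - i.val - 1) (by omega) i rfl,
              bchain_mul_e i.val (by omega) (j.val - i.val - 1) (by omega) j (by omega)]
            exact Submodule.subset_span (Set.mem_insert_iff.mpr (Or.inr rfl))
          · rw [bPath_def i l hkl,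
              e_mul_bchain i.val (by omega) (l.val - i.val - 1) (by omega) i rfl,
              bchain_mul_e_ne i.val (by omega) (l.val - i.val - 1) (by omega) j (by omega)]
            exact zero_mem _
        · rw [bPath_def k l hkl,
            e_mul_bchain_ne k.val (by omega) (l.val - k.val - 1) (by omega) i h1, zero_mul]
          exact zero_mem _
    · show eB F n i * 0 * eB F n j ∈ _
      rw [mul_zero, zero_mul]; exact zero_mem _
    · intro u v _ _ hu hv
      have hu' : eB F n i * u * eB F n j ∈
        Submodule.span F {aPath F n i j, bPath F n i j hij} := hu
      have hv' : eB F n i * v * eB F n j ∈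
        Submodule.span F {aPath F n i j, bPath F n i j hij} := hv
      show eB F n i * (u + v) * eB F n j ∈ _
      rw [mul_add, add_mul]; exact add_mem hu' hv'
    · intro a u _ hu
      have hu' : eB F n i * u * eB F n j ∈
        Submodule.span F {aPath F n i j, bPath F n i j hij} := hu
      show eB F n i * (a • u) * eB F n j ∈ _
      rw [mul_smul_comm, smul_mul_assoc]; exact Submodule.smul_mem _ a hu'
  obtain ⟨c, c', hcc⟩ := Submodule.mem_span_pair.mp hmem
  exact ⟨c, c', hcc.symm⟩

lemma aPath_deg (i j : Fin n) : aPath F n i j ∈ degCompB F n 0 := by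
  apply Submodule.subset_span
  refine ⟨(List.finRange (j.val - i.val)).map
      (fun t => BGen.a ⟨i.val + t.val, by have := t.isLt; have := j.isLt; omega⟩), ?_, ?_⟩
  · rw [List.map_map]
    apply List.sum_eq_zero
    intro x hx
    simp only [List.mem_map] at hx
    obtain ⟨t, _, rfl⟩ := hx
    rfl
  · rw [List.map_map]; rfl

lemma bPath_deg (i j : Fin n) (hij : i < j) : bPath F n i j hij ∈ degCompB F n 1 := by
  apply Submodule.subset_span
  refine ⟨BGen.b ⟨i.val, by have h1 : i.val < j.val := hij; have := j.isLt; omega⟩ ::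
      (List.finRange (j.val - i.val - 1)).map
        (fun t => BGen.a ⟨i.val + 1 + t.val, by have := t.isLt; have := j.isLt; omega⟩),
    ?_, ?_⟩
  · rw [List.map_cons, List.sum_cons, List.map_map]
    have h0 : ((List.finRange (j.val - i.val - 1)).map
        (bdeg ∘ fun t => BGen.a (n := n) ⟨i.val + 1 + t.val, by
          have := t.isLt; have := j.isLt; omega⟩)).sum = 0 := by
      apply List.sum_eq_zero
      intro x hx
      simp only [List.mem_map] at hx
      obtain ⟨t, _, rfl⟩ := hx
      rfl
    rw [h0]
    rfl
  · rw [List.map_cons, List.prod_cons, List.map_map]; rfl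

end Stmt15

/-- `dim_F B = n²`; `e_i B e_j = 0` for `i > j`; `e_i B e_i` is spanned
by `e_i`; for `i < j` the space `e_i B e_j` is spanned by the two homogeneous elements
`a_i ⋯ a_{j−1}` (degree 0) and `b_i a_{i+1} ⋯ a_{j−1}` (degree 1); altogether the
elements `e_i`, `a_i ⋯ a_{j−1}` and `b_i a_{i+1} ⋯ a_{j−1}` form an `F`-basis of `B`. -/
theorem stmt_15 (F : Type) [Field F] (n : ℕ) (hn : 1 ≤ n) :
    LinearIndependent F (bFam F n) ∧
    Submodule.span F (Set.range (bFam F n)) = ⊤ ∧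
    Module.finrank F (Bn F n) = n ^ 2 ∧
    (∀ i j : Fin n, j < i → ∀ x : Bn F n, eB F n i * x * eB F n j = 0) ∧
    (∀ (i : Fin n) (x : Bn F n), ∃ c : F, eB F n i * x * eB F n i = c • eB F n i) ∧
    (∀ (i j : Fin n) (hij : i < j) (x : Bn F n),
      ∃ c c' : F, eB F n i * x * eB F n j =
        c • aPath F n i j + c' • bPath F n i j hij) ∧
    (∀ i j : Fin n, aPath F n i j ∈ degCompB F n 0) ∧
    (∀ (i j : Fin n) (hij : i < j), bPath F n i j hij ∈ degCompB F n 1) :=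
  ⟨Stmt15.fam_li, Stmt15.span_top, Stmt15.finrank_Bn,
    fun i j hji x => Stmt15.stmt4 i j hji x,
    fun i x => Stmt15.stmt5 i x,
    fun i j hij x => Stmt15.stmt6 i j hij x,
    fun i j => Stmt15.aPath_deg i j,
    fun i j hij => Stmt15.bPath_deg i j hij⟩
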